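/- The Stefan-Neumann potential E(ξ̄) = -∑_{i=0}^{n-1} kᵢ(u_{i+1}-uᵢ) ln(F(ξᵢ/aᵢ) - F(ξ_{i+1}/aᵢ)) + kₙ aₙ b_N √π F(ξₙ/aₙ) + (1/4)∑_{i=1}^{n} dᵢξᵢ² is strictly convex on the closed-type cone Ω̄ = {ξ̄ ∈ ℝⁿ : ξ₁ > ⋯ > ξₙ ≥ 0}, and every sub-level set {ξ̄ ∈ Ω̄ : E(ξ̄) ≤ c}, c ∈ ℝ, is compact; hence E attains its minimum on Ω̄ at a unique point. -/

import Mathlib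

/-
Every summand of `E` is convex on `Ω̄`. Gaussian interval masses `F x - F y` and the tail
`1 - F x` are strictly log-concave (for the tail this is the Mills-ratio bound
`x/2 · ∫ₓ^∞ e^{-s²/4} ds < e^{-x²/4}`), so `-log (F x - F y)` is strictly convex on `{y < x}` and
`-log (1 - F x)` is strictly convex; `F` is concave on `[0, ∞)` and `b_N < 0`. Two distinct points
of `Ω̄` differ in some `ξ_m`: if `m ≥ 2`, the log term with `i = m - 1` is strictly convex along
the segment joining them; if `m = 1`, so is the term `i = 0` when `u₀ < u₁`, and `d₁ξ₁²/4`
otherwise.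

All summands but the bounded `kₙaₙb_N√π F(ξₙ/aₙ)` are nonnegative on `Ω̄`. On a sublevel set,
the term `i = 0` plus `d₁ξ₁²/4`, which tends to `∞` with `ξ₁`, bounds `ξ₁`, and the log terms
with `i ≥ 1` keep the gaps `F(ξᵢ/aᵢ) - F(ξᵢ₊₁/aᵢ)` away from `0`. These conditions cut out a
compact subset of `Ω̄`, on which `E` is continuous. A strictly convex function with compact
sublevel sets has exactly one minimiser.
-/

noncomputable def F (ξ : ℝ) : ℝ :=
  (1 / Real.sqrt Real.pi) * ∫ s in (0:ℝ)..ξ, Real.exp (-s ^ 2 / 4)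

/-- Extension of `ξ = (ξ₁, …, ξₙ)` to indices `0, …, n+1` (value at `0` irrelevant,
there the convention `F(ξ₀/a₀) = 1` is used). -/
def ext (n : ℕ) (ξ : Fin n → ℝ) : ℕ → ℝ :=
  fun i => if h : 1 ≤ i ∧ i ≤ n then ξ ⟨i - 1, by omega⟩ else 0

/-- The Stefan–Neumann potential
`E(ξ̄) = -∑_{i=0}^{n-1} kᵢ(u_{i+1}-uᵢ) ln(F(ξᵢ/aᵢ) - F(ξ_{i+1}/aᵢ))
  + kₙaₙb_N√π F(ξₙ/aₙ) + (1/4)∑_{i=1}^n dᵢξᵢ²`, with `F(ξ₀/a₀) = 1`. -/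
noncomputable def ENeu (n : ℕ) (u k a d : ℕ → ℝ) (bN : ℝ) (ξ : Fin n → ℝ) : ℝ :=
  (∑ i ∈ Finset.range n,
    -(k i * (u (i + 1) - u i) *
      Real.log ((if i = 0 then 1 else F (ext n ξ i / a i)) - F (ext n ξ (i + 1) / a i))))
  + k n * a n * bN * Real.sqrt Real.pi * F (ext n ξ n / a n)
  + (1 / 4) * ∑ i ∈ Finset.Icc 1 n, d i * (ext n ξ i) ^ 2

/-- The cone `Ω̄ = {ξ₁ > ⋯ > ξₙ ≥ 0}`. -/
def OmegaBar (n : ℕ) : Set (Fin n → ℝ) := {ξ | StrictAnti ξ ∧ ∀ i, 0 ≤ ξ i}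

open Real MeasureTheory Filter Topology
open Set hiding ext

theorem strictConvexOn_of_forall_segment {E : Type*} [AddCommGroup E] [Module ℝ E] {s : Set E}
    {f : E → ℝ} (hs : Convex ℝ s)
    (h : ∀ x ∈ s, ∀ y ∈ s, x ≠ y → StrictConvexOn ℝ (Icc 0 1) fun t : ℝ => f (x + t • (y - x))) :
    StrictConvexOn ℝ s f := by
  refine ⟨hs, fun x hx y hy hxy a b ha hb hab => ?_⟩
  have key := (h x hx y hy hxy).2 (x := 0) ⟨le_rfl, zero_le_one⟩ (y := 1) ⟨zero_le_one, le_rfl⟩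
    zero_ne_one ha hb hab
  have hz : x + (a • (0 : ℝ) + b • (1 : ℝ)) • (y - x) = a • x + b • y := by
    rw [show a = 1 - b by linarith]; simp only [smul_eq_mul]; module
  simpa only [hz, zero_smul, add_zero, one_smul, add_sub_cancel] using key

theorem strictConvexOn_neg_log_of_mul_deriv2_lt_sq {s : Set ℝ} (hs : Convex ℝ s)
    {h h' h'' : ℝ → ℝ} (hh : ∀ t, HasDerivAt h (h' t) t) (hh' : ∀ t, HasDerivAt h' (h'' t) t)
    (hpos : ∀ t ∈ s, 0 < h t) (hlc : ∀ t ∈ interior s, h t * h'' t < h' t ^ 2) :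
    StrictConvexOn ℝ s fun t => -log (h t) := by
  have hcont : Continuous h := continuous_iff_continuousAt.2 fun t => (hh t).continuousAt
  refine strictConvexOn_of_deriv2_pos hs
    (hcont.continuousOn.log fun t ht => (hpos t ht).ne').neg fun t ht => ?_
  have hpos' : ∀ t ∈ interior s, 0 < h t := fun t ht => hpos t (interior_subset ht)
  have hderiv : deriv (fun t => -log (h t)) =ᶠ[𝓝 t] fun t => -(h' t / h t) := by
    filter_upwards [isOpen_interior.mem_nhds ht] with u hu
    exact ((hh u).log (hpos' u hu).ne').neg.deriv
  rw [Function.iterate_succ_apply, Function.iterate_one, hderiv.deriv_eq,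
    (show HasDerivAt (fun t => -(h' t / h t)) _ t from
      ((hh' t).div (hh t) (hpos' t ht).ne').neg).deriv, ← neg_div]
  exact div_pos (by nlinarith [hlc t ht]) (pow_pos (hpos' t ht) 2)

theorem StrictConvexOn.comp_linearMap_lt {E F : Type*} [AddCommGroup E] [Module ℝ E]
    [AddCommGroup F] [Module ℝ F] {s : Set F} {f : F → ℝ} (hf : StrictConvexOn ℝ s f)
    (g : E →ₗ[ℝ] F) {x y : E} (hx : g x ∈ s) (hy : g y ∈ s) (hxy : g x ≠ g y) {p q : ℝ}
    (hp : 0 < p) (hq : 0 < q) (hpq : p + q = 1) :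
    f (g (p • x + q • y)) < p * f (g x) + q * f (g y) := by
  simpa only [map_add, map_smul, smul_eq_mul] using hf.2 hx hy hxy hp hq hpq

theorem convexOn_finset_sum {ι E : Type*} [AddCommGroup E] [Module ℝ E] {s : Set E}
    {t : Finset ι} {f : ι → E → ℝ} (hs : Convex ℝ s) (hf : ∀ i ∈ t, ConvexOn ℝ s (f i)) :
    ConvexOn ℝ s fun x => ∑ i ∈ t, f i x := by
  refine ⟨hs, fun x hx y hy p q hp hq hpq => ?_⟩
  simp only [smul_eq_mul, Finset.mul_sum, ← Finset.sum_add_distrib]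
  exact Finset.sum_le_sum fun i hi => (hf i hi).2 hx hy hp hq hpq

theorem finset_sum_combo_lt {ι E : Type*} [AddCommGroup E] [Module ℝ E] {s : Set E}
    {t : Finset ι} {f : ι → E → ℝ} (hf : ∀ i ∈ t, ConvexOn ℝ s (f i)) {x y : E} (hx : x ∈ s)
    (hy : y ∈ s) {p q : ℝ} (hp : 0 ≤ p) (hq : 0 ≤ q) (hpq : p + q = 1) {j : ι} (hj : j ∈ t)
    (hlt : f j (p • x + q • y) < p * f j x + q * f j y) :
    ∑ i ∈ t, f i (p • x + q • y) < p * ∑ i ∈ t, f i x + q * ∑ i ∈ t, f i y := by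
  rw [Finset.mul_sum, Finset.mul_sum, ← Finset.sum_add_distrib]
  exact Finset.sum_lt_sum (fun i hi => (hf i hi).2 hx hy hp hq hpq) ⟨j, hj, hlt⟩

lemma convex_setOf_snd_lt_fst : Convex ℝ {p : ℝ × ℝ | p.2 < p.1} := by
  simpa using convex_halfSpace_lt (f := fun p : ℝ × ℝ => p.2 - p.1)
    ((LinearMap.snd ℝ ℝ ℝ - LinearMap.fst ℝ ℝ ℝ).isLinear) 0

lemma exp_neg_div_le_of_neg_mul_log_le {w g C : ℝ} (hw : 0 < w) (hg : 0 < g)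
    (h : -(w * log g) ≤ C) : exp (-(C / w)) ≤ g := by
  rw [← exp_log hg, exp_le_exp, neg_le, le_div_iff₀ hw]
  linarith

theorem isCompact_sublevel_of_subset {E : Type*} [TopologicalSpace E] [T2Space E] {s K : Set E}
    {f : E → ℝ} (hf : ContinuousOn f s) (hK : IsCompact K) (hKs : K ⊆ s) {c : ℝ}
    (hsub : {x | x ∈ s ∧ f x ≤ c} ⊆ K) : IsCompact {x | x ∈ s ∧ f x ≤ c} := by
  have : {x | x ∈ s ∧ f x ≤ c} = K ∩ f ⁻¹' Iic c :=
    Subset.antisymm (fun x hx => ⟨hsub hx, hx.2⟩) fun x hx => ⟨hKs hx.1, hx.2⟩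
  rw [this]
  exact hK.of_isClosed_subset ((hf.mono hKs).preimage_isClosed_of_isClosed hK.isClosed
    isClosed_Iic) inter_subset_left

theorem StrictConvexOn.existsUnique_forall_le {E : Type*} [AddCommGroup E] [Module ℝ E]
    [TopologicalSpace E] {s : Set E} {f : E → ℝ} (hf : StrictConvexOn ℝ s f)
    (hcont : ContinuousOn f s) (hne : s.Nonempty) (hcomp : ∀ c, IsCompact {x | x ∈ s ∧ f x ≤ c}) :
    ∃! x, x ∈ s ∧ ∀ y ∈ s, f x ≤ f y := by
  obtain ⟨x₀, hx₀⟩ := hne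
  obtain ⟨x, ⟨hx, -⟩, hmin⟩ :=
    (hcomp (f x₀)).exists_isMinOn ⟨x₀, hx₀, le_rfl⟩ (hcont.mono fun _ h => h.1)
  have hglob : ∀ y ∈ s, f x ≤ f y := fun y hy =>
    (le_total (f y) (f x₀)).elim (fun h => hmin ⟨hy, h⟩) (hmin ⟨hx₀, le_rfl⟩ |>.trans)
  exact ⟨x, ⟨hx, hglob⟩, fun y ⟨hy, hymin⟩ =>
    hf.eq_of_isMinOn (isMinOn_iff.2 hymin) (isMinOn_iff.2 hglob) hy hx⟩

noncomputable def gauss (s : ℝ) : ℝ := exp (-s ^ 2 / 4)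

lemma gauss_pos (s : ℝ) : 0 < gauss s := exp_pos _

lemma gauss_eq_exp_neg_mul_sq : gauss = fun s => exp (-(1 / 4) * s ^ 2) := by
  ext s; rw [gauss]; ring_nf

@[fun_prop]
lemma continuous_gauss : Continuous gauss := by unfold gauss; fun_prop

lemma hasDerivAt_gauss (s : ℝ) : HasDerivAt gauss (-(s / 2) * gauss s) s := by
  have h : HasDerivAt (fun s : ℝ => -s ^ 2 / 4) (-(s / 2)) s :=
    ((hasDerivAt_pow 2 s).neg.div_const 4).congr_deriv (by push_cast; ring)
  exact h.exp.congr_deriv (mul_comm _ _)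

lemma integrable_gauss : Integrable gauss := by
  rw [gauss_eq_exp_neg_mul_sq]; exact integrable_exp_neg_mul_sq (by norm_num)

lemma integrable_mul_gauss : Integrable fun s => s / 2 * gauss s := by
  convert (integrable_mul_exp_neg_mul_sq (b := 1 / 4) (by norm_num)).div_const 2 using 2 with s
  simp only [gauss_eq_exp_neg_mul_sq]; ring

lemma hasDerivAt_neg_gauss (s : ℝ) : HasDerivAt (fun s => -gauss s) (s / 2 * gauss s) s :=
  (hasDerivAt_gauss s).neg.congr_deriv (by ring)

lemma integral_mul_gauss (y x : ℝ) : ∫ s in y..x, s / 2 * gauss s = gauss y - gauss x := by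
  rw [intervalIntegral.integral_eq_sub_of_hasDerivAt (fun s _ => hasDerivAt_neg_gauss s)
    (integrable_mul_gauss.intervalIntegrable)]
  ring

lemma integral_Ioi_mul_gauss (x : ℝ) : ∫ s in Ioi x, s / 2 * gauss s = gauss x := by
  have h : Tendsto (fun s => -gauss s) atTop (𝓝 0) := by
    rw [gauss_eq_exp_neg_mul_sq, ← neg_zero]
    exact (tendsto_exp_atBot.comp ((tendsto_pow_atTop two_ne_zero).const_mul_atTop_of_neg
      (by norm_num))).neg
  simpa using integral_Ioi_of_hasDerivAt_of_tendsto' (fun s _ => hasDerivAt_neg_gauss s)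
    integrable_mul_gauss.integrableOn h

lemma integral_Ioi_zero_gauss : ∫ s in Ioi (0 : ℝ), gauss s = √π := by
  rw [gauss_eq_exp_neg_mul_sq, integral_gaussian_Ioi, show π / (1 / 4) = 2 ^ 2 * π by ring,
    sqrt_mul (by positivity), sqrt_sq (by norm_num)]
  ring

lemma F_eq_integral (x : ℝ) : F x = (√π)⁻¹ * ∫ s in (0 : ℝ)..x, gauss s := by
  rw [F, one_div]; rfl

lemma F_sub_F_eq_integral (x y : ℝ) : F x - F y = (√π)⁻¹ * ∫ s in y..x, gauss s := by
  rw [F_eq_integral, F_eq_integral, ← mul_sub, intervalIntegral.integral_interval_sub_left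
    (continuous_gauss.intervalIntegrable _ _) (continuous_gauss.intervalIntegrable _ _)]

lemma hasDerivAt_F (x : ℝ) : HasDerivAt F ((√π)⁻¹ * gauss x) x := by
  rw [show F = fun x => (√π)⁻¹ * ∫ s in (0 : ℝ)..x, gauss s from funext F_eq_integral]
  exact (continuous_gauss.integral_hasStrictDerivAt 0 x).hasDerivAt.const_mul _

@[fun_prop]
lemma continuous_F : Continuous F :=
  continuous_iff_continuousAt.2 fun x => (hasDerivAt_F x).continuousAt

lemma strictMono_F : StrictMono F := by
  intro y x hyx
  have h : 0 < ∫ s in y..x, gauss s :=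
    intervalIntegral.intervalIntegral_pos_of_pos_on (continuous_gauss.intervalIntegrable _ _)
      (fun s _ => gauss_pos s) hyx
  exact sub_pos.1 (by rw [F_sub_F_eq_integral]; positivity)

lemma F_zero : F 0 = 0 := by simp [F]

lemma F_nonneg {x : ℝ} (hx : 0 ≤ x) : 0 ≤ F x := F_zero ▸ strictMono_F.monotone hx

lemma tendsto_sub_F_atTop (x : ℝ) :
    Tendsto (fun y => F y - F x) atTop (𝓝 ((√π)⁻¹ * ∫ s in Ioi x, gauss s)) := by
  simp_rw [F_sub_F_eq_integral]
  exact (intervalIntegral_tendsto_integral_Ioi x integrable_gauss.integrableOn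
    tendsto_id).const_mul _

lemma tendsto_F_atTop : Tendsto F atTop (𝓝 1) := by
  have h := tendsto_sub_F_atTop 0
  rw [F_zero, integral_Ioi_zero_gauss, inv_mul_cancel₀ (by positivity)] at h
  simpa using h

lemma one_sub_F_eq_integral_Ioi (x : ℝ) : 1 - F x = (√π)⁻¹ * ∫ s in Ioi x, gauss s :=
  tendsto_nhds_unique (tendsto_F_atTop.sub_const _) (tendsto_sub_F_atTop x)

lemma F_lt_one (x : ℝ) : F x < 1 :=
  (strictMono_F (lt_add_one x)).trans_le (strictMono_F.monotone.ge_of_tendsto tendsto_F_atTop _)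

lemma tendsto_neg_mul_log_one_sub_F_add {w α δ : ℝ} (hw : 0 ≤ w) (hα : 0 < α) (hδ : 0 ≤ δ)
    (h : 0 < w ∨ 0 < δ) :
    Tendsto (fun t => -(w * log (1 - F (t / α))) + δ * t ^ 2) atTop atTop := by
  have hF : Tendsto (fun t => 1 - F (t / α)) atTop (𝓝[>] 0) :=
    tendsto_nhdsWithin_iff.2 ⟨by simpa using (tendsto_F_atTop.comp
      (tendsto_id.atTop_div_const hα)).const_sub 1, .of_forall fun t => sub_pos.2 (F_lt_one _)⟩
  rcases h with hw | hδ
  · exact tendsto_atTop_add_right_of_le _ 0 (tendsto_neg_atBot_atTop.comp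
      ((tendsto_log_nhdsGT_zero.comp hF).const_mul_atBot hw)) fun t => by positivity
  · refine tendsto_atTop_add_left_of_le' _ 0 ?_ ((tendsto_pow_atTop two_ne_zero).const_mul_atTop hδ)
    filter_upwards [eventually_ge_atTop 0] with t ht
    have := F_nonneg (div_nonneg ht hα.le)
    exact neg_nonneg.2 (mul_nonpos_of_nonneg_of_nonpos hw
      (log_nonpos (sub_pos.2 (F_lt_one _)).le (by linarith)))

lemma integral_gauss_bounds {y x : ℝ} (hyx : y < x) :
    y / 2 * ∫ s in y..x, gauss s ≤ gauss y - gauss x ∧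
      gauss y - gauss x < x / 2 * ∫ s in y..x, gauss s := by
  rw [← integral_mul_gauss, ← intervalIntegral.integral_const_mul,
    ← intervalIntegral.integral_const_mul]
  constructor
  · exact intervalIntegral.integral_mono_on hyx.le
      (integrable_gauss.const_mul _).intervalIntegrable integrable_mul_gauss.intervalIntegrable
      fun s hs => mul_le_mul_of_nonneg_right (by linarith [hs.1]) (gauss_pos s).le
  · exact intervalIntegral.integral_lt_integral_of_continuousOn_of_le_of_exists_lt hyx
      (by fun_prop) (by fun_prop)
      (fun s hs => mul_le_mul_of_nonneg_right (by linarith [hs.2]) (gauss_pos s).le)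
      ⟨y, left_mem_Icc.2 hyx.le, mul_lt_mul_of_pos_right (by linarith) (gauss_pos y)⟩

/-- With `h t = ∫ s in y + t * q..x + t * p, gauss s`, this is `h * h'' < h' ^ 2` at `t = 0`:
Gaussian interval masses are strictly log-concave. -/
lemma integral_gauss_mul_lt_sq {y x p q : ℝ} (hyx : y < x) (hpq : p ≠ 0 ∨ q ≠ 0) :
    (p ^ 2 * (-(x / 2) * gauss x) - q ^ 2 * (-(y / 2) * gauss y)) * ∫ s in y..x, gauss s
      < (p * gauss x - q * gauss y) ^ 2 := by
  obtain ⟨hlo, hhi⟩ := integral_gauss_bounds hyx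
  set I := ∫ s in y..x, gauss s
  have hA := gauss_pos x
  have hB := gauss_pos y
  have hq : q ^ 2 * gauss y * (y / 2 * I) ≤ q ^ 2 * gauss y * (gauss y - gauss x) :=
    mul_le_mul_of_nonneg_left hlo (by positivity)
  rcases eq_or_ne p 0 with rfl | hp
  · have : 0 < q ^ 2 * gauss y * gauss x := by have := hpq.resolve_left (by simp); positivity
    nlinarith
  · have : p ^ 2 * gauss x * (gauss y - gauss x) < p ^ 2 * gauss x * (x / 2 * I) :=
      mul_lt_mul_of_pos_left hhi (by positivity)
    nlinarith [mul_nonneg (mul_nonneg (sq_nonneg (p - q)) hA.le) hB.le]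

lemma mul_integral_Ioi_gauss_lt (x : ℝ) : x / 2 * ∫ s in Ioi x, gauss s < gauss x := by
  have hf : Integrable fun s => x / 2 * gauss s := integrable_gauss.const_mul _
  rw [← integral_Ioi_mul_gauss, ← integral_const_mul,
    ← intervalIntegral.integral_interval_add_Ioi hf.integrableOn hf.integrableOn (b := x + 1),
    ← intervalIntegral.integral_interval_add_Ioi integrable_mul_gauss.integrableOn
      integrable_mul_gauss.integrableOn (b := x + 1)]
  apply add_lt_add_of_lt_of_le
  · exact intervalIntegral.integral_lt_integral_of_continuousOn_of_le_of_exists_lt (by linarith)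
      (by fun_prop) (by fun_prop)
      (fun s hs => mul_le_mul_of_nonneg_right (by linarith [hs.1]) (gauss_pos s).le)
      ⟨x + 1, right_mem_Icc.2 (by linarith), mul_lt_mul_of_pos_right (by linarith) (gauss_pos _)⟩
  · exact setIntegral_mono_on hf.integrableOn integrable_mul_gauss.integrableOn measurableSet_Ioi
      fun s hs => mul_le_mul_of_nonneg_right (by linarith [mem_Ioi.1 hs]) (gauss_pos s).le

theorem strictConvexOn_neg_log_F_sub :
    StrictConvexOn ℝ {p : ℝ × ℝ | p.2 < p.1} fun p => -log (F p.1 - F p.2) := by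
  refine strictConvexOn_of_forall_segment convex_setOf_snd_lt_fst fun x hx y hy hxy => ?_
  simp only [Prod.fst_add, Prod.snd_add, Prod.smul_fst, Prod.smul_snd, Prod.fst_sub,
    Prod.snd_sub, smul_eq_mul]
  set p := y.1 - x.1
  set q := y.2 - x.2
  have hpq : p ≠ 0 ∨ q ≠ 0 := by
    contrapose! hxy
    exact Prod.ext (sub_eq_zero.1 hxy.1).symm (sub_eq_zero.1 hxy.2).symm
  have hseg : ∀ t ∈ Icc (0 : ℝ) 1, x.2 + t * q < x.1 + t * p := by
    intro t ht
    have := convex_setOf_snd_lt_fst hx hy (sub_nonneg.2 ht.2) ht.1 (sub_add_cancel 1 t)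
    simp only [mem_ofPred_eq, Prod.fst_add, Prod.snd_add, Prod.smul_fst, Prod.smul_snd,
      smul_eq_mul] at this
    linarith
  have hX (t : ℝ) : HasDerivAt (fun t => x.1 + t * p) p t := (hasDerivAt_mul_const p).const_add _
  have hY (t : ℝ) : HasDerivAt (fun t => x.2 + t * q) q t := (hasDerivAt_mul_const q).const_add _
  refine strictConvexOn_neg_log_of_mul_deriv2_lt_sq (convex_Icc 0 1)
    (h' := fun t => (√π)⁻¹ * (p * gauss (x.1 + t * p) - q * gauss (x.2 + t * q)))
    (h'' := fun t => (√π)⁻¹ * (p ^ 2 * (-((x.1 + t * p) / 2) * gauss (x.1 + t * p))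
      - q ^ 2 * (-((x.2 + t * q) / 2) * gauss (x.2 + t * q))))
    (fun t => ?_) (fun t => ?_) (fun t ht => sub_pos.2 (strictMono_F (hseg t ht))) (fun t ht => ?_)
  · exact (((hasDerivAt_F _).comp t (hX t)).sub ((hasDerivAt_F _).comp t (hY t))).congr_deriv
      (by ring)
  · exact (((((hasDerivAt_gauss _).comp t (hX t)).const_mul p).sub
      (((hasDerivAt_gauss _).comp t (hY t)).const_mul q)).const_mul _).congr_deriv (by ring)
  · have key := mul_lt_mul_of_pos_left
      (integral_gauss_mul_lt_sq (hseg t (interior_subset ht)) hpq) (by positivity : 0 < (√π)⁻¹ ^ 2)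
    rw [F_sub_F_eq_integral]
    linear_combination key

theorem strictConvexOn_neg_log_one_sub_F : StrictConvexOn ℝ univ fun x => -log (1 - F x) := by
  refine strictConvexOn_neg_log_of_mul_deriv2_lt_sq convex_univ
    (fun x => (hasDerivAt_F x).const_sub 1) (fun x => ((hasDerivAt_gauss x).const_mul _).neg)
    (fun x _ => sub_pos.2 (F_lt_one x)) fun x _ => ?_
  have key := mul_lt_mul_of_pos_left (mul_integral_Ioi_gauss_lt x)
    (by have := gauss_pos x; positivity : 0 < (√π)⁻¹ ^ 2 * gauss x)
  rw [one_sub_F_eq_integral_Ioi]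
  linear_combination key

theorem concaveOn_F : ConcaveOn ℝ (Ici 0) F := by
  refine concaveOn_of_hasDerivWithinAt2_nonpos (convex_Ici 0) continuous_F.continuousOn
    (fun x _ => (hasDerivAt_F x).hasDerivWithinAt)
    (fun x _ => ((hasDerivAt_gauss x).const_mul _).hasDerivWithinAt) fun x hx => ?_
  rw [interior_Ici, mem_Ioi] at hx
  have := gauss_pos x
  have : 0 ≤ (√π)⁻¹ * (x / 2 * gauss x) := by positivity
  linarith

def extLin (n i : ℕ) : (Fin n → ℝ) →ₗ[ℝ] ℝ where
  toFun ξ := ext n ξ i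
  map_add' x y := by unfold ext; split_ifs <;> simp
  map_smul' c x := by unfold ext; split_ifs <;> simp

section Potential

variable {n : ℕ}

@[simp]
lemma extLin_apply (i : ℕ) (ξ : Fin n → ℝ) : extLin n i ξ = ext n ξ i := rfl

@[fun_prop]
lemma continuous_ext (i : ℕ) : Continuous fun ξ : Fin n → ℝ => ext n ξ i :=
  (extLin n i).continuous_of_finiteDimensional

lemma ext_succ (ξ : Fin n → ℝ) {j : ℕ} (hj : j < n) : ext n ξ (j + 1) = ξ ⟨j, hj⟩ := by
  simp [ext, hj]

lemma ext_nonneg {ξ : Fin n → ℝ} (hξ : ξ ∈ OmegaBar n) (i : ℕ) : 0 ≤ ext n ξ i := by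
  unfold ext; split_ifs
  exacts [hξ.2 _, le_rfl]

lemma ext_succ_lt {ξ : Fin n → ℝ} (hξ : ξ ∈ OmegaBar n) {i : ℕ} (h1 : 1 ≤ i) (hi : i < n) :
    ext n ξ (i + 1) < ext n ξ i := by
  obtain ⟨j, rfl⟩ : ∃ j, i = j + 1 := ⟨i - 1, by omega⟩
  rw [ext_succ ξ hi, ext_succ ξ (by omega)]
  exact hξ.1 (Fin.mk_lt_mk.2 (by omega))

lemma mem_OmegaBar_of_ext_succ_lt {ξ : Fin n → ℝ} (h0 : ∀ j, 0 ≤ ξ j)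
    (h : ∀ i, 1 ≤ i → i < n → ext n ξ (i + 1) < ext n ξ i) : ξ ∈ OmegaBar n := by
  refine ⟨?_, h0⟩
  cases n with
  | zero => exact fun i => i.elim0
  | succ m =>
    refine Fin.strictAnti_iff_succ_lt.2 fun j => ?_
    have := h (j + 1) (by omega) (by omega)
    rw [ext_succ ξ (by omega), ext_succ ξ (by omega)] at this
    exact this

lemma convex_OmegaBar : Convex ℝ (OmegaBar n) := by
  rintro x ⟨hxa, hx0⟩ y ⟨hya, hy0⟩ p q hp hq hpq
  refine ⟨fun i j hij => ?_, fun i => ?_⟩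
  · simp only [Pi.add_apply, Pi.smul_apply, smul_eq_mul]
    rcases hp.eq_or_lt with rfl | hp
    · simpa [show q = 1 by linarith] using hya hij
    · nlinarith [mul_le_mul_of_nonneg_left (hya hij).le hq, mul_lt_mul_of_pos_left (hxa hij) hp]
  · simp only [Pi.add_apply, Pi.smul_apply, smul_eq_mul]
    exact add_nonneg (mul_nonneg hp (hx0 i)) (mul_nonneg hq (hy0 i))

lemma OmegaBar_nonempty (n : ℕ) : (OmegaBar n).Nonempty :=
  ⟨fun i => n - i, fun i j hij => by simpa using hij, fun i => by simp [i.isLt.le]⟩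

end Potential

namespace ENeu

variable {n : ℕ} {u k a d : ℕ → ℝ} {bN : ℝ}

noncomputable def gap (n : ℕ) (a : ℕ → ℝ) (i : ℕ) (ξ : Fin n → ℝ) : ℝ :=
  (if i = 0 then 1 else F (ext n ξ i / a i)) - F (ext n ξ (i + 1) / a i)

noncomputable def logTerm (n : ℕ) (u k a : ℕ → ℝ) (i : ℕ) (ξ : Fin n → ℝ) : ℝ :=
  -(k i * (u (i + 1) - u i) * log (gap n a i ξ))

noncomputable def gapMap (n : ℕ) (a : ℕ → ℝ) (i : ℕ) : (Fin n → ℝ) →ₗ[ℝ] ℝ × ℝ :=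
  (a i)⁻¹ • (extLin n i).prod (extLin n (i + 1))

lemma eq_sum_logTerm (ξ : Fin n → ℝ) :
    ENeu n u k a d bN ξ = ∑ i ∈ Finset.range n, logTerm n u k a i ξ
      + k n * a n * bN * √π * F (ext n ξ n / a n)
      + 1 / 4 * ∑ i ∈ Finset.Icc 1 n, d i * ext n ξ i ^ 2 := rfl

lemma logTerm_zero_eq (ξ : Fin n → ℝ) :
    logTerm n u k a 0 ξ = -(k 0 * (u 1 - u 0) * log (1 - F (ext n ξ 1 / a 0))) := by
  simp [logTerm, gap]

lemma logTerm_eq {i : ℕ} (hi : i ≠ 0) (ξ : Fin n → ℝ) :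
    logTerm n u k a i ξ =
      k i * (u (i + 1) - u i) * -log (F (gapMap n a i ξ).1 - F (gapMap n a i ξ).2) := by
  simp [logTerm, gap, gapMap, hi, div_eq_inv_mul]

lemma weight_nonneg (hk : ∀ i ≤ n, 0 < k i) (hu0 : u 0 ≤ u 1)
    (hu : ∀ i, 1 ≤ i → i < n → u i < u (i + 1)) {i : ℕ} (hi : i < n) :
    0 ≤ k i * (u (i + 1) - u i) := by
  refine mul_nonneg (hk i hi.le).le (sub_nonneg.2 ?_)
  rcases Nat.eq_zero_or_pos i with rfl | h1
  exacts [hu0, (hu i h1 hi).le]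

lemma weight_pos (hk : ∀ i ≤ n, 0 < k i) (hu : ∀ i, 1 ≤ i → i < n → u i < u (i + 1))
    {i : ℕ} (h1 : 1 ≤ i) (hi : i < n) : 0 < k i * (u (i + 1) - u i) :=
  mul_pos (hk i hi.le) (sub_pos.2 (hu i h1 hi))

lemma gapMap_mem (ha : ∀ i ≤ n, 0 < a i) {ξ : Fin n → ℝ} (hξ : ξ ∈ OmegaBar n) {i : ℕ}
    (h1 : 1 ≤ i) (hi : i < n) : gapMap n a i ξ ∈ {p : ℝ × ℝ | p.2 < p.1} := by
  simpa [gapMap] using mul_lt_mul_of_pos_left (ext_succ_lt hξ h1 hi) (inv_pos.2 (ha i hi.le))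

lemma gap_pos (ha : ∀ i ≤ n, 0 < a i) {ξ : Fin n → ℝ} (hξ : ξ ∈ OmegaBar n) {i : ℕ}
    (hi : i < n) : 0 < gap n a i ξ := by
  rcases Nat.eq_zero_or_pos i with rfl | h1
  · simpa [gap] using F_lt_one _
  · simpa [gap, h1.ne'] using strictMono_F
      ((div_lt_div_iff_of_pos_right (ha i hi.le)).2 (ext_succ_lt hξ h1 hi))

lemma gap_le_one (ha : ∀ i ≤ n, 0 < a i) {ξ : Fin n → ℝ} (hξ : ξ ∈ OmegaBar n) {i : ℕ}
    (hi : i < n) : gap n a i ξ ≤ 1 := by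
  have := F_nonneg (div_nonneg (ext_nonneg hξ (i + 1)) (ha i hi.le).le)
  unfold gap
  split_ifs
  · linarith
  · linarith [F_lt_one (ext n ξ i / a i)]

lemma logTerm_nonneg (hk : ∀ i ≤ n, 0 < k i) (ha : ∀ i ≤ n, 0 < a i) (hu0 : u 0 ≤ u 1)
    (hu : ∀ i, 1 ≤ i → i < n → u i < u (i + 1)) {ξ : Fin n → ℝ} (hξ : ξ ∈ OmegaBar n) {i : ℕ}
    (hi : i < n) : 0 ≤ logTerm n u k a i ξ :=
  neg_nonneg.2 (mul_nonpos_of_nonneg_of_nonpos (weight_nonneg hk hu0 hu hi)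
    (log_nonpos (gap_pos ha hξ hi).le (gap_le_one ha hξ hi)))

lemma convexOn_logTerm (hk : ∀ i ≤ n, 0 < k i) (ha : ∀ i ≤ n, 0 < a i) (hu0 : u 0 ≤ u 1)
    (hu : ∀ i, 1 ≤ i → i < n → u i < u (i + 1)) {i : ℕ} (hi : i < n) :
    ConvexOn ℝ (OmegaBar n) (logTerm n u k a i) := by
  rcases Nat.eq_zero_or_pos i with rfl | h1
  · refine (((strictConvexOn_neg_log_one_sub_F.convexOn.comp_linearMap
      ((a 0)⁻¹ • extLin n 1)).smul (weight_nonneg hk hu0 hu hi)).subset (subset_univ _)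
      convex_OmegaBar).congr fun ξ _ => ?_
    simp [logTerm_zero_eq, div_eq_inv_mul]
  · refine (((strictConvexOn_neg_log_F_sub.convexOn.comp_linearMap (gapMap n a i)).smul
      (weight_nonneg hk hu0 hu hi)).subset (fun ξ hξ => gapMap_mem ha hξ h1 hi)
      convex_OmegaBar).congr fun ξ _ => ?_
    simp [logTerm_eq h1.ne']

lemma logTerm_zero_combo_lt (hk : ∀ i ≤ n, 0 < k i) (ha : ∀ i ≤ n, 0 < a i) (hu01 : u 0 < u 1)
    {x y : Fin n → ℝ} (hxy : ext n x 1 ≠ ext n y 1) {p q : ℝ} (hp : 0 < p) (hq : 0 < q)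
    (hpq : p + q = 1) :
    logTerm n u k a 0 (p • x + q • y) < p * logTerm n u k a 0 x + q * logTerm n u k a 0 y := by
  have key := strictConvexOn_neg_log_one_sub_F.comp_linearMap_lt ((a 0)⁻¹ • extLin n 1)
    (mem_univ _) (mem_univ _) (by simpa [(ha 0 (Nat.zero_le n)).ne'] using hxy) hp hq hpq
  have := mul_lt_mul_of_pos_left key (mul_pos (hk 0 (Nat.zero_le n)) (sub_pos.2 hu01))
  simp only [logTerm_zero_eq, div_eq_inv_mul]
  simp only [LinearMap.smul_apply, extLin_apply, smul_eq_mul] at this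
  linarith

lemma logTerm_combo_lt (hk : ∀ i ≤ n, 0 < k i) (ha : ∀ i ≤ n, 0 < a i)
    (hu : ∀ i, 1 ≤ i → i < n → u i < u (i + 1)) {i : ℕ} (h1 : 1 ≤ i) (hi : i < n)
    {x y : Fin n → ℝ} (hx : x ∈ OmegaBar n) (hy : y ∈ OmegaBar n)
    (hxy : ext n x (i + 1) ≠ ext n y (i + 1)) {p q : ℝ} (hp : 0 < p) (hq : 0 < q)
    (hpq : p + q = 1) :
    logTerm n u k a i (p • x + q • y) < p * logTerm n u k a i x + q * logTerm n u k a i y := by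
  have key := strictConvexOn_neg_log_F_sub.comp_linearMap_lt (gapMap n a i)
    (gapMap_mem ha hx h1 hi) (gapMap_mem ha hy h1 hi)
    (by simp [gapMap, (ha i hi.le).ne', hxy]) hp hq hpq
  have := mul_lt_mul_of_pos_left key (weight_pos hk hu h1 hi)
  simp only [logTerm_eq (Nat.one_le_iff_ne_zero.1 h1)]
  linarith

lemma boundary_coeff_neg (hb : bN < 0) (hkn : 0 < k n) (han : 0 < a n) :
    k n * a n * bN * √π < 0 :=
  mul_neg_of_neg_of_pos (mul_neg_of_pos_of_neg (mul_pos hkn han) hb) (sqrt_pos.2 pi_pos)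

lemma convexOn_mul_F_ext {κ α : ℝ} (hκ : κ ≤ 0) (hα : 0 < α) (i : ℕ) :
    ConvexOn ℝ (OmegaBar n) fun ξ => κ * F (ext n ξ i / α) := by
  refine (((concaveOn_F.comp_linearMap (α⁻¹ • extLin n i)).neg.smul (neg_nonneg.2 hκ)).subset
    (fun ξ hξ => ?_) convex_OmegaBar).congr fun ξ _ => ?_
  · simpa using mul_nonneg (inv_nonneg.2 hα.le) (ext_nonneg hξ i)
  · simp [div_eq_inv_mul]

lemma convexOn_mul_ext_sq {c : ℝ} (hc : 0 ≤ c) (i : ℕ) :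
    ConvexOn ℝ (OmegaBar n) fun ξ => c * ext n ξ i ^ 2 :=
  (((even_two.convexOn_pow).comp_linearMap (extLin n i)).smul hc).subset (subset_univ _)
    convex_OmegaBar

lemma mul_ext_sq_combo_lt {c : ℝ} (hc : 0 < c) {i : ℕ} {x y : Fin n → ℝ}
    (hxy : ext n x i ≠ ext n y i) {p q : ℝ} (hp : 0 < p) (hq : 0 < q) (hpq : p + q = 1) :
    c * ext n (p • x + q • y) i ^ 2 < p * (c * ext n x i ^ 2) + q * (c * ext n y i ^ 2) := by
  have key := (even_two.strictConvexOn_pow two_ne_zero).comp_linearMap_lt (extLin n i)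
    (mem_univ _) (mem_univ _) hxy hp hq hpq
  have := mul_lt_mul_of_pos_left key hc
  simp only [extLin_apply] at this
  linarith

lemma exists_combo_lt (hk : ∀ i ≤ n, 0 < k i) (ha : ∀ i ≤ n, 0 < a i) (hu0 : u 0 ≤ u 1)
    (hu : ∀ i, 1 ≤ i → i < n → u i < u (i + 1)) (hd1 : u 0 = u 1 → 0 < d 1)
    {x y : Fin n → ℝ} (hx : x ∈ OmegaBar n) (hy : y ∈ OmegaBar n) (hxy : x ≠ y) {p q : ℝ}
    (hp : 0 < p) (hq : 0 < q) (hpq : p + q = 1) :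
    (∃ i ∈ Finset.range n,
      logTerm n u k a i (p • x + q • y) < p * logTerm n u k a i x + q * logTerm n u k a i y) ∨
    ∃ i ∈ Finset.Icc 1 n,
      d i * ext n (p • x + q • y) i ^ 2 < p * (d i * ext n x i ^ 2) + q * (d i * ext n y i ^ 2) := by
  obtain ⟨⟨j, hjn⟩, hj⟩ := Function.ne_iff.1 hxy
  have hext : ext n x (j + 1) ≠ ext n y (j + 1) := by rwa [ext_succ x hjn, ext_succ y hjn]
  rcases Nat.eq_zero_or_pos j with rfl | hj1
  · rcases hu0.lt_or_eq with hu01 | hu01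
    · exact .inl ⟨0, Finset.mem_range.2 hjn, logTerm_zero_combo_lt hk ha hu01 hext hp hq hpq⟩
    · exact .inr ⟨1, Finset.mem_Icc.2 ⟨le_rfl, hjn⟩,
        mul_ext_sq_combo_lt (hd1 hu01) hext hp hq hpq⟩
  · exact .inl ⟨j, Finset.mem_range.2 hjn,
      logTerm_combo_lt hk ha hu hj1 hjn hx hy hext hp hq hpq⟩

theorem strictConvexOn (hb : bN < 0) (hk : ∀ i ≤ n, 0 < k i) (ha : ∀ i ≤ n, 0 < a i)
    (hd : ∀ i, 1 ≤ i → i ≤ n → 0 ≤ d i) (hu0 : u 0 ≤ u 1)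
    (hu : ∀ i, 1 ≤ i → i < n → u i < u (i + 1)) (hd1 : u 0 = u 1 → 0 < d 1) :
    StrictConvexOn ℝ (OmegaBar n) (ENeu n u k a d bN) := by
  have hL (i : ℕ) (hi : i ∈ Finset.range n) : ConvexOn ℝ (OmegaBar n) (logTerm n u k a i) :=
    convexOn_logTerm hk ha hu0 hu (Finset.mem_range.1 hi)
  have hQ (i : ℕ) (hi : i ∈ Finset.Icc 1 n) :
      ConvexOn ℝ (OmegaBar n) fun ξ => d i * ext n ξ i ^ 2 :=
    convexOn_mul_ext_sq (hd i (Finset.mem_Icc.1 hi).1 (Finset.mem_Icc.1 hi).2) i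
  have hB := convexOn_mul_F_ext (boundary_coeff_neg hb (hk n le_rfl) (ha n le_rfl)).le
    (ha n le_rfl) (n := n) n
  refine ⟨convex_OmegaBar, fun x hx y hy hxy p q hp hq hpq => ?_⟩
  have hL' := (convexOn_finset_sum convex_OmegaBar hL).2 hx hy hp.le hq.le hpq
  have hQ' := (convexOn_finset_sum convex_OmegaBar hQ).2 hx hy hp.le hq.le hpq
  have hB' := hB.2 hx hy hp.le hq.le hpq
  simp only [smul_eq_mul] at hL' hQ' hB' ⊢
  rw [eq_sum_logTerm, eq_sum_logTerm, eq_sum_logTerm]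
  rcases exists_combo_lt hk ha hu0 hu hd1 hx hy hxy hp hq hpq with ⟨i, hi, h⟩ | ⟨i, hi, h⟩
  · linarith [finset_sum_combo_lt hL hx hy hp.le hq.le hpq hi h]
  · linarith [finset_sum_combo_lt hQ hx hy hp.le hq.le hpq hi h]

@[fun_prop]
lemma continuous_gap (a : ℕ → ℝ) (i : ℕ) : Continuous (gap n a i) := by
  unfold gap; split_ifs <;> fun_prop

lemma continuousOn (ha : ∀ i ≤ n, 0 < a i) : ContinuousOn (ENeu n u k a d bN) (OmegaBar n) := by
  have hL (i : ℕ) (hi : i ∈ Finset.range n) : ContinuousOn (logTerm n u k a i) (OmegaBar n) :=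
    (continuousOn_const.mul ((continuous_gap a i).continuousOn.log
      fun ξ hξ => (gap_pos ha hξ (Finset.mem_range.1 hi)).ne')).neg
  exact ((continuousOn_finsetSum _ hL).add (by fun_prop)).add (by fun_prop)

lemma add_logTerm_le (hb : bN < 0) (hk : ∀ i ≤ n, 0 < k i) (ha : ∀ i ≤ n, 0 < a i)
    (hd : ∀ i, 1 ≤ i → i ≤ n → 0 ≤ d i) (hu0 : u 0 ≤ u 1)
    (hu : ∀ i, 1 ≤ i → i < n → u i < u (i + 1)) {ξ : Fin n → ℝ} (hξ : ξ ∈ OmegaBar n) {i : ℕ}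
    (hi : i < n) :
    k n * a n * bN * √π + logTerm n u k a i ξ + 1 / 4 * (d 1 * ext n ξ 1 ^ 2)
      ≤ ENeu n u k a d bN ξ := by
  have hκ := boundary_coeff_neg hb (hk n le_rfl) (ha n le_rfl)
  have hL := Finset.single_le_sum (fun j hj => logTerm_nonneg hk ha hu0 hu hξ
    (Finset.mem_range.1 hj)) (Finset.mem_range.2 hi)
  have hQ := Finset.single_le_sum (f := fun j => d j * ext n ξ j ^ 2)
    (fun j hj => mul_nonneg (hd j (Finset.mem_Icc.1 hj).1 (Finset.mem_Icc.1 hj).2) (sq_nonneg _))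
    (Finset.mem_Icc.2 ⟨le_rfl, by omega⟩)
  have hF := F_lt_one (ext n ξ n / a n)
  rw [eq_sum_logTerm]
  nlinarith

lemma exists_bound_of_le (hb : bN < 0) (hk : ∀ i ≤ n, 0 < k i) (ha : ∀ i ≤ n, 0 < a i)
    (hd : ∀ i, 1 ≤ i → i ≤ n → 0 ≤ d i) (hu0 : u 0 ≤ u 1)
    (hu : ∀ i, 1 ≤ i → i < n → u i < u (i + 1)) (hd1 : u 0 = u 1 → 0 < d 1) (c : ℝ) :
    ∃ R, ∀ ξ ∈ OmegaBar n, ENeu n u k a d bN ξ ≤ c → ∀ j, ξ j ≤ R := by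
  rcases Nat.eq_zero_or_pos n with rfl | hn
  · exact ⟨0, fun ξ _ _ j => j.elim0⟩
  have hT := tendsto_neg_mul_log_one_sub_F_add (δ := 1 / 4 * d 1) (weight_nonneg hk hu0 hu hn)
    (ha 0 hn.le) (mul_nonneg (by norm_num) (hd 1 le_rfl hn)) (by
      rcases hu0.lt_or_eq with h | h
      exacts [.inl (mul_pos (hk 0 hn.le) (sub_pos.2 h)), .inr (by linarith [hd1 h])])
  obtain ⟨R, hR⟩ := (hT.eventually_gt_atTop (c - k n * a n * bN * √π)).exists_forall_of_atTop
  refine ⟨R, fun ξ hξ hc j => (hξ.1.antitone (show ⟨0, hn⟩ ≤ j from Nat.zero_le j)).trans ?_⟩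
  rw [← ext_succ ξ hn]
  by_contra! hlt
  have := hR _ hlt.le
  have := add_logTerm_le hb hk ha hd hu0 hu hξ hn
  rw [logTerm_zero_eq] at this
  linarith

lemma exp_le_gap_of_le (hb : bN < 0) (hk : ∀ i ≤ n, 0 < k i) (ha : ∀ i ≤ n, 0 < a i)
    (hd : ∀ i, 1 ≤ i → i ≤ n → 0 ≤ d i) (hu0 : u 0 ≤ u 1)
    (hu : ∀ i, 1 ≤ i → i < n → u i < u (i + 1)) {c : ℝ} {ξ : Fin n → ℝ}
    (hξ : ξ ∈ OmegaBar n) (hc : ENeu n u k a d bN ξ ≤ c) {i : ℕ} (h1 : 1 ≤ i) (hi : i < n) :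
    exp (-((c - k n * a n * bN * √π) / (k i * (u (i + 1) - u i)))) ≤ gap n a i ξ := by
  refine exp_neg_div_le_of_neg_mul_log_le (weight_pos hk hu h1 hi) (gap_pos ha hξ hi) ?_
  have := add_logTerm_le hb hk ha hd hu0 hu hξ hi
  have : 0 ≤ 1 / 4 * (d 1 * ext n ξ 1 ^ 2) :=
    mul_nonneg (by norm_num) (mul_nonneg (hd 1 le_rfl (by omega)) (sq_nonneg _))
  unfold logTerm at *
  linarith

lemma exists_isCompact_sublevel_subset (hb : bN < 0) (hk : ∀ i ≤ n, 0 < k i)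
    (ha : ∀ i ≤ n, 0 < a i) (hd : ∀ i, 1 ≤ i → i ≤ n → 0 ≤ d i) (hu0 : u 0 ≤ u 1)
    (hu : ∀ i, 1 ≤ i → i < n → u i < u (i + 1)) (hd1 : u 0 = u 1 → 0 < d 1) (c : ℝ) :
    ∃ K, IsCompact K ∧ K ⊆ OmegaBar n ∧ {ξ | ξ ∈ OmegaBar n ∧ ENeu n u k a d bN ξ ≤ c} ⊆ K := by
  obtain ⟨R, hR⟩ := exists_bound_of_le hb hk ha hd hu0 hu hd1 c
  set ε : ℕ → ℝ := fun i => exp (-((c - k n * a n * bN * √π) / (k i * (u (i + 1) - u i))))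
  refine ⟨(univ.pi fun _ => Icc 0 R) ∩ ⋂ i ∈ Finset.Ico 1 n, {ξ | ε i ≤ gap n a i ξ},
    (isCompact_univ_pi fun _ => isCompact_Icc).inter_right
      (isClosed_biInter fun i _ => isClosed_le continuous_const (continuous_gap a i)),
    fun ξ ⟨hbox, hgap⟩ => ?_, fun ξ ⟨hξ, hc⟩ => ⟨fun j _ => ⟨hξ.2 j, hR ξ hξ hc j⟩, ?_⟩⟩
  · refine mem_OmegaBar_of_ext_succ_lt (fun j => (hbox j trivial).1) fun i h1 hi => ?_
    have := (exp_pos _).trans_le (mem_iInter₂.1 hgap i (Finset.mem_Ico.2 ⟨h1, hi⟩))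
    simp only [gap, if_neg (by omega : i ≠ 0), sub_pos, strictMono_F.lt_iff_lt,
      div_lt_div_iff_of_pos_right (ha i hi.le)] at this
    exact this
  · exact mem_iInter₂.2 fun i hi => exp_le_gap_of_le hb hk ha hd hu0 hu hξ hc
      (Finset.mem_Ico.1 hi).1 (Finset.mem_Ico.1 hi).2

theorem isCompact_sublevel (hb : bN < 0) (hk : ∀ i ≤ n, 0 < k i) (ha : ∀ i ≤ n, 0 < a i)
    (hd : ∀ i, 1 ≤ i → i ≤ n → 0 ≤ d i) (hu0 : u 0 ≤ u 1)
    (hu : ∀ i, 1 ≤ i → i < n → u i < u (i + 1)) (hd1 : u 0 = u 1 → 0 < d 1) (c : ℝ) :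
    IsCompact {ξ | ξ ∈ OmegaBar n ∧ ENeu n u k a d bN ξ ≤ c} := by
  obtain ⟨K, hK, hKΩ, hsub⟩ := exists_isCompact_sublevel_subset hb hk ha hd hu0 hu hd1 c
  exact isCompact_sublevel_of_subset (continuousOn ha) hK hKΩ hsub

end ENeu

theorem ENeu_strictConvex_coercive_general (n : ℕ) (u k a d : ℕ → ℝ) (bN : ℝ)
    (hb : bN < 0)
    (hk : ∀ i ≤ n, 0 < k i) (ha : ∀ i ≤ n, 0 < a i)
    (hd : ∀ i, 1 ≤ i → i ≤ n → 0 ≤ d i)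
    (hu0 : u 0 ≤ u 1) (hu : ∀ i, 1 ≤ i → i < n → u i < u (i + 1))
    (hd1 : u 0 = u 1 → 0 < d 1) :
    StrictConvexOn ℝ (OmegaBar n) (ENeu n u k a d bN) ∧
    (∀ c : ℝ, IsCompact {ξ | ξ ∈ OmegaBar n ∧ ENeu n u k a d bN ξ ≤ c}) ∧
    ∃! ξ, ξ ∈ OmegaBar n ∧ ∀ η ∈ OmegaBar n, ENeu n u k a d bN ξ ≤ ENeu n u k a d bN η := by
  have hconv := ENeu.strictConvexOn hb hk ha hd hu0 hu hd1
  have hcomp := ENeu.isCompact_sublevel hb hk ha hd hu0 hu hd1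
  exact ⟨hconv, hcomp, hconv.existsUnique_forall_le (ENeu.continuousOn ha) (OmegaBar_nonempty n)
    hcomp⟩

theorem ENeu_strictConvex_coercive (n : ℕ) (hn : 1 ≤ n) (u k a d : ℕ → ℝ) (bN : ℝ)
    (hb : bN < 0)
    (hk : ∀ i ≤ n, 0 < k i) (ha : ∀ i ≤ n, 0 < a i)
    (hd : ∀ i, 1 ≤ i → i ≤ n → 0 ≤ d i)
    (hu0 : u 0 ≤ u 1) (hu : ∀ i, 1 ≤ i → i < n → u i < u (i + 1))
    (hd1 : u 0 = u 1 → 0 < d 1) :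
    StrictConvexOn ℝ (OmegaBar n) (ENeu n u k a d bN) ∧
    (∀ c : ℝ, IsCompact {ξ | ξ ∈ OmegaBar n ∧ ENeu n u k a d bN ξ ≤ c}) ∧
    ∃! ξ, ξ ∈ OmegaBar n ∧ ∀ η ∈ OmegaBar n, ENeu n u k a d bN ξ ≤ ENeu n u k a d bN η :=
  ENeu_strictConvex_coercive_general n u k a d bN hb hk ha hd hu0 hu hd1
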